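/- arXiv:1205.5660 — 3 statements merged into one kernel-verified Lean document; each statement's English description precedes it below -/
import Mathlib

section
/- Let X and Y be compact metric spaces and ε > 0. Then the set C_ε(X,Y) of continuous ε-maps from X to Y is an open subset of C(X,Y) with the uniform metric. -/
/-!
The pairs of points at distance at least `ε` form a compact set `K ⊆ X × X`, and `g` is an
`ε`-map exactly when `g × g` sends `K` into the complement of the diagonal of `Y`, which is open.
In the compact-open topology (the uniform one, as `X` is compact) the maps sending a compact set
into an open set form an open set, and `g ↦ g × g` is continuous.
-/

open Set

namespace ContinuousMap

variable {X Y : Type*} [TopologicalSpace X] [TopologicalSpace Y]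

theorem continuous_prodMap_self [LocallyCompactSpace X] :
    Continuous fun g : C(X, Y) => g.prodMap g :=
  continuous_of_continuous_uncurry _ <| by
    change Continuous fun q : C(X, Y) × X × X => (q.1 q.2.1, q.1 q.2.2)
    fun_prop

theorem isOpen_setOf_forall_apply_ne [LocallyCompactSpace X] [T2Space Y] {K : Set (X × X)}
    (hK : IsCompact K) : IsOpen {g : C(X, Y) | ∀ p ∈ K, g p.1 ≠ g p.2} :=
  (isOpen_setOfPred_mapsTo hK isClosed_diagonal.isOpen_compl).preimage continuous_prodMap_self

end ContinuousMap

theorem epsilon_maps_isOpen_general {X Y : Type*}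
    [MetricSpace X] [CompactSpace X] [MetricSpace Y]
    (ε : ℝ) :
    IsOpen {g : C(X, Y) | ∀ x₁ x₂ : X, g x₁ = g x₂ → dist x₁ x₂ < ε} := by
  have hK : IsCompact {p : X × X | ε ≤ dist p.1 p.2} :=
    (isClosed_le continuous_const continuous_dist).isCompact
  convert ContinuousMap.isOpen_setOf_forall_apply_ne (Y := Y) hK using 1
  ext g
  simp only [mem_ofPred_eq, Prod.forall, ← not_lt]
  exact forall₂_congr fun _ _ => not_imp_not.symm

/-- For compact metric spaces `X` and `Y` and `ε > 0`, the set of continuous `ε`-maps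
(maps `g` with `g x₁ = g x₂ → dist x₁ x₂ < ε`) is open in `C(X,Y)` with the uniform metric. -/
theorem epsilon_maps_isOpen {X Y : Type*}
    [MetricSpace X] [CompactSpace X] [MetricSpace Y] [CompactSpace Y]
    (ε : ℝ) (hε : 0 < ε) :
    IsOpen {g : C(X, Y) | ∀ x₁ x₂ : X, g x₁ = g x₂ → dist x₁ x₂ < ε} :=
  epsilon_maps_isOpen_general ε
end

section
/- (Parameterized Brown theorem.) Let I and X be compact metric spaces, let {f_t}_{t∈I} be a near-isotopy of X, and let F : X×I → X×I, F(x,t) = (f_t(x),t), be the corresponding fat map. Then for every ε > 0 there exists a homeomorphism β : lim(X×I, F) → X×I such that: (a) β(ι_t(lim(X,f_t))) = X×{t} for every t ∈ I; and (b) sup_{z ∈ lim(X×I,F)} d(β(z), π₀(z)) < ε, where π₀ : lim(X×I,F) → X×I is projection to the 0-th coordinate. -/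
/-- The inverse limit `lim(X,f) = {x ∈ X^ℕ : f (x (i+1)) = x i}`. -/
def InvLim {X : Type*} (f : X → X) : Set (ℕ → X) :=
  {x | ∀ i, f (x (i + 1)) = x i}

/-- The embedding `ι_t : lim(X,f_t) → lim(X×I, F)`, `ι_t(x₀,x₁,…) = ((x₀,t),(x₁,t),…)`,
where `F(x,t) = (f (x,t), t)` is the fat map of the family `f`. -/
def iota {X I : Type*} (f : X × I → X) (t : I)
    (x : InvLim (fun x => f (x, t))) :
    InvLim (fun p : X × I => (f p, p.2)) :=
  ⟨fun i => (x.val i, t), fun i => congrArg (fun a => (a, t)) (x.property i)⟩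

/-!
Brown's argument, run fibrewise over a map `π` (for the fat map, the projection `X × I → I`).
Choose `π`-preserving homeomorphisms `gₙ` with `gₙ₊₁ ≈ gₙ ∘ F` up to errors `cₙ / 4` that decay at
least geometrically; then `β z = lim gₙ (zₙ)` is a uniform limit of continuous maps, hence
continuous, and it preserves the fibres of `π` because every `gₙ` does. Each `cₙ` is also taken
below the modulus by which `gₙ` separates points whose first `n` iterates are `1/(n+1)`-apart; this
makes `β` injective. Its range is compact and dense, since an inverse limit of a surjection has
points with any prescribed `n`-th coordinate, so `β` is a homeomorphism onto `Y`.
-/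

open Filter Topology

theorem exists_seq_of_forall_exists_succ {α : Type*} {P : ℕ → α → Prop}
    {R : ℕ → α → α → Prop} {a : α} (h₀ : P 0 a) (h : ∀ n x, P n x → ∃ y, P (n + 1) y ∧ R n x y) :
    ∃ s : ℕ → α, s 0 = a ∧ ∀ n, P n (s n) ∧ R n (s n) (s (n + 1)) := by
  choose! next hnextP hnextR using h
  let s : ℕ → α := fun n => Nat.rec a next n
  have hs : ∀ n, P n (s n) := fun n => by
    induction n with
    | zero => exact h₀
    | succ n ih => exact hnextP n _ ih
  exact ⟨s, rfl, fun n => ⟨hs n, hnextR n _ (hs n)⟩⟩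

namespace InvLim

variable {Y : Type*} {F : Y → Y}

theorem isClosed [TopologicalSpace Y] [T2Space Y] (hF : Continuous F) : IsClosed (InvLim F) := by
  simp only [InvLim, Set.ofPred_forall]
  exact isClosed_iInter fun i => isClosed_eq (hF.comp (continuous_apply _)) (continuous_apply i)

theorem compactSpace [TopologicalSpace Y] [CompactSpace Y] [T2Space Y] (hF : Continuous F) :
    CompactSpace (InvLim F) :=
  isCompact_iff_compactSpace.mp (isClosed hF).isCompact

theorem iterate_apply (z : InvLim F) (i j : ℕ) : F^[j] (z.1 (i + j)) = z.1 i := by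
  induction j with
  | zero => rfl
  | succ j ih => rw [Function.iterate_succ_apply, ← add_assoc, z.2, ih]

theorem invariant_apply {T : Type*} {π : Y → T} (hπF : ∀ p, π (F p) = π p) (z : InvLim F)
    (i : ℕ) : π (z.1 i) = π (z.1 0) := by
  induction i with
  | zero => rfl
  | succ i ih => rw [← ih, ← z.2 i, hπF]

theorem exists_apply_eq (hF : Function.Surjective F) (n : ℕ) (y : Y) :
    ∃ z : InvLim F, z.1 n = y := by
  set s := Function.surjInv hF
  refine ⟨⟨fun i => F^[n] (s^[i] y), fun i => ?_⟩,
    (Function.rightInverse_surjInv hF).iterate n y⟩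
  change F (F^[n] (s^[i + 1] y)) = F^[n] (s^[i] y)
  rw [← Function.iterate_succ_apply' F, Function.iterate_succ_apply,
    Function.iterate_succ_apply' s, Function.rightInverse_surjInv hF]

end InvLim

section Brown

variable {Y T : Type*} [MetricSpace Y] {π : Y → T} {F : Y → Y}

def IsNearHomeomorphOver (π : Y → T) (F : Y → Y) : Prop :=
  ∀ δ > 0, ∃ G : Y ≃ₜ Y, (∀ p, π (G p) = π p) ∧ ∀ p, dist (G p) (F p) < δ

theorem IsNearHomeomorphOver.surjective [CompactSpace Y] (h : IsNearHomeomorphOver π F)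
    (hF : Continuous F) : Function.Surjective F := by
  intro y
  have hy : y ∈ closure (Set.range F) := Metric.mem_closure_iff.2 fun δ hδ => by
    obtain ⟨G, -, hG⟩ := h δ hδ
    exact ⟨F (G.symm y), Set.mem_range_self _, by simpa using hG (G.symm y)⟩
  rwa [(isCompact_range hF).isClosed.closure_eq] at hy

theorem exists_pos_forall_dist_iterate_le [CompactSpace Y] (hF : Continuous F) (g : Y ≃ₜ Y)
    (n : ℕ) {ρ : ℝ} (hρ : 0 < ρ) :
    ∃ c > 0, ∀ a b, dist (g a) (g b) ≤ c → ∀ j ≤ n, dist (F^[j] a) (F^[j] b) ≤ ρ := by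
  have hequi : UniformEquicontinuous fun j : Fin (n + 1) => F^[j] ∘ g.symm :=
    uniformEquicontinuous_finite.2 fun j =>
      CompactSpace.uniformContinuous_of_continuous ((hF.iterate j).comp g.symm.continuous)
  obtain ⟨c, hc, hsep⟩ := Metric.uniformEquicontinuous_iff.1 hequi ρ hρ
  refine ⟨c / 2, half_pos hc, fun a b hab j hj => ?_⟩
  simpa using (hsep (g a) (g b) (by linarith) ⟨j, by omega⟩).le

/-- The separation clause `dist_iterate_le` is what makes the limit map of Brown's construction
injective. -/
structure IsBrownStage (π : Y → T) (F : Y → Y) (n : ℕ) (g : Y ≃ₜ Y) (c : ℝ) : Prop where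
  pos : 0 < c
  fiberwise : ∀ p, π (g p) = π p
  dist_iterate_le :
    ∀ a b, dist (g a) (g b) ≤ c → ∀ j ≤ n, dist (F^[j] a) (F^[j] b) ≤ 1 / (n + 1)

theorem exists_isBrownStage [CompactSpace Y] (hF : Continuous F) {g : Y ≃ₜ Y}
    (hg : ∀ p, π (g p) = π p) (n : ℕ) {r : ℝ} (hr : 0 < r) : ∃ c ≤ r, IsBrownStage π F n g c := by
  obtain ⟨c, hc, hsep⟩ :=
    exists_pos_forall_dist_iterate_le hF g n (ρ := 1 / (n + 1)) (by positivity)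
  exact ⟨min r c, min_le_left _ _, lt_min hr hc, hg,
    fun a b hab => hsep a b (hab.trans (min_le_right _ _))⟩

theorem IsBrownStage.exists_succ [CompactSpace Y] (hF : Continuous F)
    (hNH : IsNearHomeomorphOver π F) {n : ℕ} {g : Y ≃ₜ Y} {c : ℝ} (hs : IsBrownStage π F n g c) :
    ∃ g' c', IsBrownStage π F (n + 1) g' c' ∧ c' ≤ c / 2 ∧
      ∀ a, dist (g' a) (g (F a)) ≤ c / 4 := by
  obtain ⟨δ, hδ, hg⟩ := Metric.uniformContinuous_iff.1
    (CompactSpace.uniformContinuous_of_continuous g.continuous) (c / 4) (by linarith [hs.pos])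
  obtain ⟨G, hGπ, hGF⟩ := hNH δ hδ
  obtain ⟨c', hc', hstage⟩ := exists_isBrownStage hF (g := G.trans g)
    (fun p => (hs.fiberwise _).trans (hGπ p)) (n + 1) (half_pos hs.pos)
  exact ⟨G.trans g, c', hstage, hc', fun a => (hg (hGF a)).le⟩

structure BrownSequence (π : Y → T) (F : Y → Y) where
  g : ℕ → Y ≃ₜ Y
  c : ℕ → ℝ
  g_zero : g 0 = Homeomorph.refl Y
  stage : ∀ n, IsBrownStage π F n (g n) (c n)
  c_succ_le : ∀ n, c (n + 1) ≤ c n / 2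
  dist_succ_le : ∀ n a, dist (g (n + 1) a) (g n (F a)) ≤ c n / 4

namespace BrownSequence

theorem exists_c_zero_le [CompactSpace Y] (hF : Continuous F) (hNH : IsNearHomeomorphOver π F)
    {ε : ℝ} (hε : 0 < ε) : ∃ S : BrownSequence π F, S.c 0 ≤ ε := by
  obtain ⟨c₀, hc₀, h₀⟩ := exists_isBrownStage hF (g := Homeomorph.refl Y) (fun _ => rfl) 0 hε
  obtain ⟨s, hs₀, hs⟩ := exists_seq_of_forall_exists_succ
    (P := fun n (s : (Y ≃ₜ Y) × ℝ) => IsBrownStage π F n s.1 s.2)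
    (R := fun _ s s' => s'.2 ≤ s.2 / 2 ∧ ∀ a, dist (s'.1 a) (s.1 (F a)) ≤ s.2 / 4)
    (a := (Homeomorph.refl Y, c₀)) h₀ fun n s hstage => by
      obtain ⟨g', c', h'⟩ := hstage.exists_succ hF hNH
      exact ⟨(g', c'), h'⟩
  exact ⟨⟨fun n => (s n).1, fun n => (s n).2, by rw [hs₀], fun n => (hs n).1,
    fun n => (hs n).2.1, fun n => (hs n).2.2⟩, by simpa [hs₀] using hc₀⟩

variable (S : BrownSequence π F)

theorem c_pos (n : ℕ) : 0 < S.c n := (S.stage n).pos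

theorem c_add_le (n k : ℕ) : S.c (n + k) ≤ S.c n / 2 ^ k := by
  induction k with
  | zero => simp
  | succ k ih =>
    calc S.c (n + (k + 1)) ≤ S.c (n + k) / 2 := S.c_succ_le _
      _ ≤ S.c n / 2 ^ k / 2 := by gcongr
      _ = S.c n / 2 ^ (k + 1) := by rw [pow_succ, div_div]

theorem tendsto_c : Tendsto S.c atTop (𝓝 0) := by
  have hgeom : Tendsto (fun n : ℕ => S.c 0 / 2 ^ n) atTop (𝓝 0) := by
    simpa [div_eq_mul_inv] using (tendsto_pow_atTop_nhds_zero_of_lt_one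
      (by norm_num : (0 : ℝ) ≤ 2⁻¹) (by norm_num)).const_mul (S.c 0)
  exact squeeze_zero (fun n => (S.c_pos n).le) (fun n => by simpa using S.c_add_le 0 n) hgeom

def approx (n : ℕ) (z : InvLim F) : Y := S.g n (z.1 n)

theorem continuous_approx (n : ℕ) : Continuous (S.approx n) :=
  (S.g n).continuous.comp ((continuous_apply n).comp continuous_subtype_val)

theorem dist_approx_succ_le (z : InvLim F) (n : ℕ) :
    dist (S.approx n z) (S.approx (n + 1) z) ≤ S.c n / 4 := by
  have h := S.dist_succ_le n (z.1 (n + 1))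
  rw [z.2 n] at h
  rwa [dist_comm]

theorem dist_approx_add_succ_le (z : InvLim F) (n k : ℕ) :
    dist (S.approx (n + k) z) (S.approx (n + k + 1) z) ≤ S.c n / 2 / 2 / 2 ^ k :=
  calc dist (S.approx (n + k) z) (S.approx (n + k + 1) z) ≤ S.c (n + k) / 4 :=
        S.dist_approx_succ_le z _
    _ ≤ S.c n / 2 ^ k / 4 := by gcongr; exact S.c_add_le n k
    _ = S.c n / 2 / 2 / 2 ^ k := by ring

theorem cauchySeq_approx (z : InvLim F) : CauchySeq fun n => S.approx n z :=
  cauchySeq_of_le_geometric_two (C := S.c 0 / 2) fun k => by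
    simpa using S.dist_approx_add_succ_le z 0 k

noncomputable def lim [CompleteSpace Y] (z : InvLim F) : Y :=
  (cauchySeq_tendsto_of_complete (S.cauchySeq_approx z)).choose

theorem tendsto_approx [CompleteSpace Y] (z : InvLim F) :
    Tendsto (fun n => S.approx n z) atTop (𝓝 (S.lim z)) :=
  (cauchySeq_tendsto_of_complete (S.cauchySeq_approx z)).choose_spec

theorem dist_approx_lim_le [CompleteSpace Y] (z : InvLim F) (n : ℕ) :
    dist (S.approx n z) (S.lim z) ≤ S.c n / 2 := by
  have htail : Tendsto (fun k => S.approx (n + k) z) atTop (𝓝 (S.lim z)) := by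
    simpa only [add_comm n] using (tendsto_add_atTop_iff_nat n).2 (S.tendsto_approx z)
  simpa using dist_le_of_le_geometric_two_of_tendsto (C := S.c n / 2)
    (S.dist_approx_add_succ_le z n) htail 0

theorem dist_lim_le [CompleteSpace Y] (z : InvLim F) : dist (S.lim z) (z.1 0) ≤ S.c 0 / 2 := by
  simpa [dist_comm, approx, S.g_zero] using S.dist_approx_lim_le z 0

theorem continuous_lim [CompleteSpace Y] : Continuous S.lim := by
  have hunif : TendstoUniformly S.approx S.lim atTop := by
    refine Metric.tendstoUniformly_iff.2 fun δ hδ => ?_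
    filter_upwards [S.tendsto_c.eventually_lt_const hδ] with n hn z
    rw [dist_comm]
    linarith [S.dist_approx_lim_le z n, S.c_pos n]
  exact hunif.continuous (Eventually.of_forall S.continuous_approx).frequently

theorem injective_lim [CompleteSpace Y] : Function.Injective S.lim := by
  intro z w hzw
  ext m : 2
  suffices h : ∀ k, dist (z.1 m) (w.1 m) ≤ 1 / ((m + k : ℕ) + 1) by
    refine dist_le_zero.1 (ge_of_tendsto tendsto_one_div_add_atTop_nhds_zero_nat ?_)
    filter_upwards [eventually_ge_atTop m] with n hn
    obtain ⟨k, rfl⟩ := Nat.exists_eq_add_of_le hn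
    exact h k
  intro k
  have hclose : dist (S.approx (m + k) z) (S.approx (m + k) w) ≤ S.c (m + k) :=
    calc _ ≤ dist (S.approx (m + k) z) (S.lim z) + dist (S.approx (m + k) w) (S.lim w) :=
          hzw ▸ dist_triangle_right _ _ _
      _ ≤ S.c (m + k) / 2 + S.c (m + k) / 2 :=
          add_le_add (S.dist_approx_lim_le z _) (S.dist_approx_lim_le w _)
      _ = S.c (m + k) := add_halves _
  simpa only [InvLim.iterate_apply] using
    (S.stage (m + k)).dist_iterate_le _ _ hclose k (Nat.le_add_left k m)

theorem surjective_lim [CompactSpace Y] (hF : Continuous F) (hFs : Function.Surjective F) :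
    Function.Surjective S.lim := by
  have := InvLim.compactSpace hF
  intro y
  have hy : y ∈ closure (Set.range S.lim) := Metric.mem_closure_iff.2 fun δ hδ => by
    obtain ⟨n, hn⟩ := (S.tendsto_c.eventually_lt_const hδ).exists
    obtain ⟨z, hz⟩ := InvLim.exists_apply_eq hFs n ((S.g n).symm y)
    have hy : S.approx n z = y := by simp [approx, hz]
    refine ⟨S.lim z, Set.mem_range_self z, ?_⟩
    linarith [hy ▸ S.dist_approx_lim_le z n, S.c_pos n]
  rwa [(isCompact_range S.continuous_lim).isClosed.closure_eq] at hy

theorem invariant_lim [CompleteSpace Y] [TopologicalSpace T] [T2Space T] (hπ : Continuous π)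
    (hπF : ∀ p, π (F p) = π p) (z : InvLim F) : π (S.lim z) = π (z.1 0) :=
  tendsto_nhds_unique ((hπ.tendsto _).comp (S.tendsto_approx z)) <| tendsto_const_nhds.congr
    fun n => (((S.stage n).fiberwise _).trans (InvLim.invariant_apply hπF z n)).symm

noncomputable def toHomeomorph [CompactSpace Y] (hF : Continuous F)
    (hFs : Function.Surjective F) : InvLim F ≃ₜ Y :=
  haveI := InvLim.compactSpace hF
  S.continuous_lim.homeoOfEquivCompactToT2
    (f := Equiv.ofBijective S.lim ⟨S.injective_lim, S.surjective_lim hF hFs⟩)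

theorem coe_toHomeomorph [CompactSpace Y] (hF : Continuous F) (hFs : Function.Surjective F) :
    ⇑(S.toHomeomorph hF hFs) = S.lim :=
  rfl

end BrownSequence

theorem InvLim.exists_homeomorph_of_isNearHomeomorphOver [CompactSpace Y] [TopologicalSpace T]
    [T2Space T] (hF : Continuous F) (hπ : Continuous π) (hπF : ∀ p, π (F p) = π p)
    (hNH : IsNearHomeomorphOver π F) {ε : ℝ} (hε : 0 < ε) :
    ∃ β : InvLim F ≃ₜ Y, (∀ z, π (β z) = π (z.1 0)) ∧ ∀ z, dist (β z) (z.1 0) < ε := by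
  obtain ⟨S, hS⟩ := BrownSequence.exists_c_zero_le hF hNH hε
  refine ⟨S.toHomeomorph hF (hNH.surjective hF), S.invariant_lim hπ hπF, fun z => ?_⟩
  rw [S.coe_toHomeomorph]
  linarith [S.dist_lim_le z]

end Brown

section Parameterized

variable {X I : Type*}

def IsNearIsotopy [MetricSpace X] [TopologicalSpace I] (f : X × I → X) : Prop :=
  ∀ ε > (0 : ℝ), ∃ h : I → X ≃ₜ X,
    Continuous (fun p : X × I => h p.2 p.1) ∧ ∀ p : X × I, dist (h p.2 p.1) (f p) < ε

noncomputable def fiberwiseHomeomorph [TopologicalSpace X] [TopologicalSpace I] [CompactSpace X]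
    [CompactSpace I] [T2Space X] [T2Space I] (h : I → X ≃ₜ X)
    (hc : Continuous fun p : X × I => h p.2 p.1) : X × I ≃ₜ X × I :=
  (hc.prodMk continuous_snd).homeoOfEquivCompactToT2
    (f := { toFun := fun p => (h p.2 p.1, p.2)
            invFun := fun p => ((h p.2).symm p.1, p.2)
            left_inv := fun p => by simp
            right_inv := fun p => by simp })

theorem IsNearIsotopy.isNearHomeomorphOver [MetricSpace X] [CompactSpace X] [MetricSpace I]
    [CompactSpace I] {f : X × I → X} (hNI : IsNearIsotopy f) :
    IsNearHomeomorphOver Prod.snd fun p : X × I => (f p, p.2) := by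
  intro δ hδ
  obtain ⟨h, hc, hd⟩ := hNI δ hδ
  refine ⟨fiberwiseHomeomorph h hc, fun p => rfl, fun p => ?_⟩
  change dist ((h p.2 p.1, p.2) : X × I) (f p, p.2) < δ
  rw [Prod.dist_eq, dist_self]
  exact max_lt (hd p) hδ

theorem range_iota (f : X × I → X) (t : I) :
    Set.range (iota f t) = {z | (z.1 0).2 = t} := by
  ext z
  constructor
  · rintro ⟨x, rfl⟩
    rfl
  · intro (hz : (z.1 0).2 = t)
    have ht : ∀ i, (z.1 i).2 = t := fun i =>
      (InvLim.invariant_apply (F := fun p : X × I => (f p, p.2)) (π := Prod.snd) (fun _ => rfl)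
        z i).trans hz
    refine ⟨⟨fun i => (z.1 i).1, fun i => ?_⟩,
      Subtype.ext (funext fun i => Prod.ext rfl (ht i).symm)⟩
    change f ((z.1 (i + 1)).1, t) = (z.1 i).1
    rw [← ht (i + 1)]
    exact congrArg Prod.fst (z.2 i)

end Parameterized

/-- Parameterized Brown theorem: if `{f_t}_{t∈I}` is a near-isotopy of a compact metric
space `X` (with compact metric parameter space `I`), and `F(x,t) = (f_t x, t)` is the
corresponding fat map, then for every `ε > 0` there is a homeomorphism
`β : lim(X×I, F) → X×I` with `β(ι_t(lim(X,f_t))) = X×{t}` for every `t`, and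
`dist (β z) (π₀ z) < ε` for every `z ∈ lim(X×I,F)`. -/
theorem parameterized_brown {X I : Type*}
    [MetricSpace X] [CompactSpace X] [MetricSpace I] [CompactSpace I]
    (f : X × I → X) (hf : Continuous f)
    (hNI : ∀ ε > (0 : ℝ), ∃ h : I → X ≃ₜ X,
        Continuous (fun p : X × I => h p.2 p.1) ∧
        ∀ p : X × I, dist (h p.2 p.1) (f p) < ε)
    (ε : ℝ) (hε : 0 < ε) :
    ∃ β : InvLim (fun p : X × I => (f p, p.2)) ≃ₜ X × I,
      (∀ t : I, Set.range (fun x : InvLim (fun x => f (x, t)) => β (iota f t x))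
          = Set.univ ×ˢ ({t} : Set I)) ∧
      (∀ z : InvLim (fun p : X × I => (f p, p.2)), dist (β z) (z.val 0) < ε) := by
  obtain ⟨β, hβπ, hβε⟩ := InvLim.exists_homeomorph_of_isNearHomeomorphOver
    (hf.prodMk continuous_snd) continuous_snd (fun _ => rfl)
    (IsNearIsotopy.isNearHomeomorphOver (f := f) hNI) hε
  refine ⟨β, fun t => ?_, hβε⟩
  have hfiber : {z | (z.1 0).2 = t} = β ⁻¹' (Set.univ ×ˢ {t}) := by
    ext z
    simp [hβπ]
  rw [Set.range_comp', range_iota, hfiber, β.image_preimage]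
end

section
/- (Brown's theorem with control.) If f : X → X is a near-homeomorphism of a compact metric space X, then for every ε > 0 there exists a homeomorphism β : lim(X,f) → X with sup_{x ∈ lim(X,f)} d(β(x), x₀) < ε. In particular, lim(X,f) is homeomorphic to X. -/
open Filter Topology

section Telescoping

variable {X : Type*} [PseudoMetricSpace X] {u : ℕ → X} {δ : ℕ → ℝ} {m : ℕ}

lemma dist_le_sub_of_dist_succ_le (h : ∀ k, m ≤ k → dist (u (k + 1)) (u k) ≤ δ k - δ (k + 1))
    {n : ℕ} (hmn : m ≤ n) : dist (u n) (u m) ≤ δ m - δ n := by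
  induction n, hmn using Nat.le_induction with
  | base => simp
  | succ n hmn ih =>
    linarith [dist_triangle (u (n + 1)) (u n) (u m), h n hmn]

lemma dist_le_of_tendsto_of_dist_succ_le (hδ : ∀ n, 0 ≤ δ n)
    (h : ∀ k, m ≤ k → dist (u (k + 1)) (u k) ≤ δ k - δ (k + 1)) {L : X}
    (hu : Tendsto u atTop (𝓝 L)) : dist L (u m) ≤ δ m :=
  le_of_tendsto (hu.dist tendsto_const_nhds) <| eventually_atTop.2
    ⟨m, fun n hn => by linarith [dist_le_sub_of_dist_succ_le h hn, hδ n]⟩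

lemma cauchySeq_of_dist_succ_le_sub (hδ : ∀ n, 0 ≤ δ n)
    (h : ∀ k, dist (u (k + 1)) (u k) ≤ δ k - δ (k + 1)) : CauchySeq u := by
  -- `δ` is antitone and bounded below, hence convergent, and `u` is no worse than `δ`.
  have hanti : Antitone δ := antitone_nat_of_succ_le fun n => by linarith [dist_nonneg.trans (h n)]
  have hδ_cauchy : CauchySeq δ :=
    (tendsto_atTop_ciInf hanti ⟨0, Set.forall_mem_range.2 hδ⟩).cauchySeq
  rw [Metric.cauchySeq_iff'] at hδ_cauchy ⊢
  intro ε hε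
  obtain ⟨N, hN⟩ := hδ_cauchy ε hε
  refine ⟨N, fun n hn => ?_⟩
  have hδn := hN n hn
  rw [Real.dist_eq] at hδn
  linarith [dist_le_sub_of_dist_succ_le (fun k _ => h k) hn, neg_le_abs (δ n - δ N)]

end Telescoping

lemma iterate_apply_add_of_mem_invLim {X : Type*} {f : X → X} {x : ℕ → X} (hx : x ∈ InvLim f)
    (n k : ℕ) : f^[n] (x (n + k)) = x k := by
  induction n with
  | zero => simp
  | succ n ih => rw [Nat.add_right_comm, Function.iterate_succ_apply, hx, ih]

lemma isClosed_invLim {X : Type*} [TopologicalSpace X] [T2Space X] {f : X → X}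
    (hf : Continuous f) : IsClosed (InvLim f) := by
  simp only [InvLim, Set.ofPred_forall]
  exact isClosed_iInter fun i =>
    isClosed_eq (hf.comp (continuous_apply (i + 1))) (continuous_apply i)

section NearHomeomorph

variable {X : Type*} [MetricSpace X]

def IsNearHomeomorph (f : X → X) : Prop :=
  ∀ δ > 0, ∃ e : X ≃ₜ X, ∀ x, dist (e x) (f x) ≤ δ

lemma isNearHomeomorph_of_mem_closure [CompactSpace X] {f : C(X, X)}
    (hf : f ∈ closure {g : C(X, X) | ∃ e : X ≃ₜ X, ⇑e = ⇑g}) : IsNearHomeomorph f := by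
  intro δ hδ
  obtain ⟨g, ⟨e, he⟩, hfg⟩ := Metric.mem_closure_iff.mp hf δ hδ
  refine ⟨e, fun x => ?_⟩
  rw [he, dist_comm]
  exact (ContinuousMap.dist_apply_le_dist x).trans hfg.le

end NearHomeomorph

structure BrownSystem {X : Type*} [MetricSpace X] (f : X → X) where
  δ : ℕ → ℝ
  E : ℕ → X ≃ₜ X
  g : ℕ → X ≃ₜ X
  δ_pos (n : ℕ) : 0 < δ n
  δ_succ_le (n : ℕ) : δ (n + 1) ≤ δ n / 2
  g_zero : g 0 = Homeomorph.refl X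
  g_succ (n : ℕ) (x : X) : g (n + 1) x = g n (E n x)
  dist_E_le (n : ℕ) (x : X) : dist (E n x) (f x) ≤ δ (n + 1)
  dist_iterate_le (n a j : ℕ) (haj : a ≤ j) (hjn : j ≤ n) (x y : X) (hxy : dist x y ≤ δ (n + 1)) :
    dist (f^[a] ((g j).symm (g n x))) (f^[a] ((g j).symm (g n y))) ≤ δ n / 2

namespace BrownSystem

section Construction

variable {X : Type*} [MetricSpace X] [CompactSpace X] {f : X → X}

lemma exists_step (hf : Continuous f) (hnear : IsNearHomeomorph f) (n : ℕ) (G : ℕ → X ≃ₜ X)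
    (d : {d : ℝ // 0 < d}) :
    ∃ p : {d : ℝ // 0 < d} × (X ≃ₜ X), p.1.1 ≤ d.1 / 2 ∧ (∀ x, dist (p.2 x) (f x) ≤ p.1) ∧
      ∀ a j, a ≤ j → j ≤ n → ∀ x y, dist x y ≤ p.1 →
        dist (f^[a] ((G j).symm (G n x))) (f^[a] ((G j).symm (G n y))) ≤ d.1 / 2 := by
  let φ : Fin (n + 1) × Fin (n + 1) → X → X := fun q => f^[q.1] ∘ (G q.2).symm ∘ G n
  have hφ : UniformEquicontinuous φ := uniformEquicontinuous_finite.mpr fun q =>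
    CompactSpace.uniformContinuous_of_continuous
      ((hf.iterate _).comp ((G q.2).symm.continuous.comp (G n).continuous))
  obtain ⟨η, hη, hφη⟩ := Metric.uniformEquicontinuous_iff.mp hφ _ (half_pos d.2)
  have hd' : 0 < min (d.1 / 2) (η / 2) := lt_min (half_pos d.2) (half_pos hη)
  obtain ⟨e, he⟩ := hnear _ hd'
  refine ⟨(⟨_, hd'⟩, e), min_le_left _ _, he, fun a j haj hjn x y hxy => ?_⟩
  have hxy' : dist x y < η := by linarith [min_le_right (d.1 / 2) (η / 2)]
  exact (hφη x y hxy' (⟨a, by omega⟩, ⟨j, by omega⟩)).le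

theorem exists_δ_zero_eq (hf : Continuous f) (hnear : IsNearHomeomorph f) {r : ℝ} (hr : 0 < r) :
    ∃ S : BrownSystem f, S.δ 0 = r := by
  choose step hstep using exists_step hf hnear
  -- the state at stage `n` is `(δ n, G)`, where `G j = g j` for `j ≤ n`
  let state : ℕ → {d : ℝ // 0 < d} × (ℕ → X ≃ₜ X) := fun n =>
    Nat.rec (⟨r, hr⟩, fun _ => Homeomorph.refl X)
      (fun n s => ((step n s.2 s.1).1,
        fun j => if j ≤ n then s.2 j else (step n s.2 s.1).2.trans (s.2 n))) n
  have state_succ_of_le (n j : ℕ) (hj : j ≤ n) : (state (n + 1)).2 j = (state n).2 j := if_pos hj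
  have state_succ_self (n : ℕ) :
      (state (n + 1)).2 (n + 1) = (step n (state n).2 (state n).1).2.trans ((state n).2 n) :=
    if_neg n.not_succ_le_self
  have state_stable (n j : ℕ) (hj : j ≤ n) : (state n).2 j = (state j).2 j := by
    induction n, hj using Nat.le_induction with
    | base => rfl
    | succ n hjn ih => rw [state_succ_of_le n j hjn, ih]
  refine ⟨{ δ := fun n => (state n).1
            E := fun n => (step n (state n).2 (state n).1).2
            g := fun n => (state n).2 n
            δ_pos := fun n => (state n).1.2
            δ_succ_le := fun n => (hstep n _ _).1
            g_zero := rfl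
            g_succ := fun n x => by rw [state_succ_self]; rfl
            dist_E_le := fun n => (hstep n _ _).2.1
            dist_iterate_le := fun n a j haj hjn => ?_ }, rfl⟩
  have := (hstep n (state n).2 (state n).1).2.2 a j haj hjn
  rwa [state_stable n j hjn] at this

end Construction

variable {X : Type*} [MetricSpace X] {f : X → X} (S : BrownSystem f)

lemma half_le_sub (n : ℕ) : S.δ n / 2 ≤ S.δ n - S.δ (n + 1) := by
  linarith [S.δ_succ_le n]

lemma tendsto_δ : Tendsto S.δ atTop (𝓝 0) := by
  have hgeom (n : ℕ) : S.δ n ≤ S.δ 0 * (1 / 2) ^ n := by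
    induction n with
    | zero => simp
    | succ n ih => rw [pow_succ]; linarith [S.δ_succ_le n]
  refine squeeze_zero (fun n => (S.δ_pos n).le) hgeom ?_
  simpa using (tendsto_pow_atTop_nhds_zero_of_lt_one (by norm_num : (0 : ℝ) ≤ 1 / 2)
    (by norm_num)).const_mul (S.δ 0)

lemma dist_g_succ_le (n : ℕ) (x : X) : dist (S.g (n + 1) x) (S.g n (f x)) ≤ S.δ n / 2 := by
  simpa [S.g_succ, S.g_zero] using
    S.dist_iterate_le n 0 0 le_rfl n.zero_le _ _ (S.dist_E_le n x)

lemma symm_g_eq (n : ℕ) (y : X) : (S.g n).symm y = S.E n ((S.g (n + 1)).symm y) := by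
  rw [Homeomorph.symm_apply_eq, ← S.g_succ, Homeomorph.apply_symm_apply]

lemma dist_g_iterate_symm_le (n m : ℕ) (a : X) :
    dist (S.g m (f^[n] ((S.g (n + m)).symm a))) a ≤ S.δ m := by
  induction n generalizing m with
  | zero => simpa using (S.δ_pos m).le
  | succ n ih =>
    set y := f^[n] ((S.g (n + 1 + m)).symm a)
    have hy : dist (S.g (m + 1) y) a ≤ S.δ (m + 1) := by
      simpa only [y, Nat.add_right_comm n 1 m, Nat.add_assoc n m 1] using ih (m + 1)
    rw [Function.iterate_succ_apply']
    linarith [dist_triangle (S.g m (f y)) (S.g (m + 1) y) a, S.dist_g_succ_le m y,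
      dist_comm (S.g m (f y)) (S.g (m + 1) y), S.δ_succ_le m]

noncomputable def β (x : ℕ → X) : X :=
  haveI : Nonempty X := ⟨x 0⟩
  limUnder atTop fun n => S.g n (x n)

section β

variable {x : ℕ → X} (hx : x ∈ InvLim f)
include hx

lemma dist_g_apply_succ_le (n : ℕ) :
    dist (S.g (n + 1) (x (n + 1))) (S.g n (x n)) ≤ S.δ n - S.δ (n + 1) := by
  rw [← hx n]
  exact (S.dist_g_succ_le n _).trans (S.half_le_sub n)

variable [CompleteSpace X]

lemma tendsto_β : Tendsto (fun n => S.g n (x n)) atTop (𝓝 (S.β x)) :=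
  (cauchySeq_of_dist_succ_le_sub (fun n => (S.δ_pos n).le)
    (S.dist_g_apply_succ_le hx)).tendsto_limUnder

lemma dist_β_le (m : ℕ) : dist (S.β x) (S.g m (x m)) ≤ S.δ m :=
  dist_le_of_tendsto_of_dist_succ_le (fun n => (S.δ_pos n).le)
    (fun k _ => S.dist_g_apply_succ_le hx k) (S.tendsto_β hx)

end β

noncomputable def γ (a : X) (k : ℕ) : X :=
  haveI : Nonempty X := ⟨a⟩
  limUnder atTop fun n => f^[n] ((S.g (n + k)).symm a)

variable [CompleteSpace X]

lemma continuous_β : Continuous fun x : InvLim f => S.β x := by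
  refine TendstoUniformly.continuous (F := fun n (x : InvLim f) => S.g n (x.1 n)) (p := atTop) ?_
    (Frequently.of_forall fun n =>
      (S.g n).continuous.comp ((continuous_apply n).comp continuous_subtype_val))
  rw [Metric.tendstoUniformly_iff]
  intro t ht
  filter_upwards [S.tendsto_δ.eventually (gt_mem_nhds ht)] with n hn x
  exact (S.dist_β_le x.2 n).trans_lt hn

lemma tendsto_γ (a : X) (k : ℕ) :
    Tendsto (fun n => f^[n] ((S.g (n + k)).symm a)) atTop (𝓝 (S.γ a k)) := by
  refine (cauchySeq_of_dist_succ_le_sub (δ := fun n => S.δ (n + k)) (fun n => (S.δ_pos _).le)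
    fun n => ?_).tendsto_limUnder
  set z := (S.g (n + k + 1)).symm a
  have hfE : dist (f z) (S.E (n + k) z) ≤ S.δ (n + k + 1) := by
    rw [dist_comm]; exact S.dist_E_le (n + k) z
  have hstep := S.dist_iterate_le (n + k) n (n + k) (by omega) le_rfl _ _ hfE
  simp only [Homeomorph.symm_apply_apply] at hstep
  rw [Nat.add_right_comm, Function.iterate_succ_apply, S.symm_g_eq (n + k) a]
  exact hstep.trans (S.half_le_sub _)

lemma γ_mem (hf : Continuous f) (a : X) : S.γ a ∈ InvLim f := fun k => by
  refine tendsto_nhds_unique ((hf.tendsto _).comp (S.tendsto_γ a (k + 1))) ?_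
  convert (S.tendsto_γ a k).comp (tendsto_add_atTop_nat 1) using 1
  funext n
  rw [Function.comp_apply, Function.comp_apply, Function.iterate_succ_apply',
    show n + 1 + k = n + (k + 1) by omega]

lemma dist_g_γ_le (m : ℕ) (a : X) : dist (S.g m (S.γ a m)) a ≤ S.δ m :=
  le_of_tendsto' ((((S.g m).continuous.tendsto _).comp (S.tendsto_γ a m)).dist tendsto_const_nhds)
    fun n => S.dist_g_iterate_symm_le n m a

lemma β_γ (hf : Continuous f) (a : X) : S.β (S.γ a) = a := by
  refine tendsto_nhds_unique (S.tendsto_β (S.γ_mem hf a)) ?_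
  rw [tendsto_iff_dist_tendsto_zero]
  exact squeeze_zero (fun _ => dist_nonneg) (fun m => S.dist_g_γ_le m a) S.tendsto_δ

section γβ

variable (hf : Continuous f) {x : ℕ → X} (hx : x ∈ InvLim f)
include hf hx

lemma dist_iterate_symm_β_le (n k : ℕ) :
    dist (f^[n] ((S.g (n + k)).symm (S.β x))) (x k) ≤ S.δ (n + k) := by
  let u m := f^[n] ((S.g (n + k)).symm (S.g m (x m)))
  have hu : Tendsto u atTop (𝓝 (f^[n] ((S.g (n + k)).symm (S.β x)))) :=
    (((hf.iterate n).comp (S.g (n + k)).symm.continuous).tendsto _).comp (S.tendsto_β hx)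
  have hstep (m : ℕ) (hm : n + k ≤ m) : dist (u (m + 1)) (u m) ≤ S.δ m - S.δ (m + 1) := by
    simp only [u, S.g_succ, ← hx m]
    exact (S.dist_iterate_le m n (n + k) (Nat.le_add_right n k) hm _ _ (S.dist_E_le m _)).trans
      (S.half_le_sub m)
  have h := dist_le_of_tendsto_of_dist_succ_le (fun m => (S.δ_pos m).le) hstep hu
  rwa [show u (n + k) = x k by simp only [u, Homeomorph.symm_apply_apply,
    iterate_apply_add_of_mem_invLim hx]] at h

lemma γ_β (k : ℕ) : S.γ (S.β x) k = x k := by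
  refine tendsto_nhds_unique (S.tendsto_γ _ k) ?_
  rw [tendsto_iff_dist_tendsto_zero]
  exact squeeze_zero (fun _ => dist_nonneg) (S.dist_iterate_symm_β_le hf hx · k)
    (S.tendsto_δ.comp (tendsto_add_atTop_nat k))

end γβ

noncomputable def homeomorph [CompactSpace X] (hf : Continuous f) : InvLim f ≃ₜ X :=
  haveI : CompactSpace (InvLim f) := isCompact_iff_compactSpace.mp (isClosed_invLim hf).isCompact
  Continuous.homeoOfEquivCompactToT2 (f :=
    { toFun := fun x => S.β x
      invFun := fun a => ⟨S.γ a, S.γ_mem hf a⟩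
      left_inv := fun x => Subtype.ext (funext (S.γ_β hf x.2))
      right_inv := S.β_γ hf }) S.continuous_β

lemma homeomorph_apply [CompactSpace X] (hf : Continuous f) (x : InvLim f) :
    S.homeomorph hf x = S.β x :=
  rfl

end BrownSystem

/-- Brown's theorem with control: if `f : X → X` is a near-homeomorphism of a compact
metric space `X`, then for every `ε > 0` there is a homeomorphism `β : lim(X,f) → X`
with `dist (β x) x₀ < ε` for all `x = (x₀,x₁,…) ∈ lim(X,f)`. In particular `lim(X,f)`
is homeomorphic to `X`. -/
theorem brown_theorem_with_control {X : Type*} [MetricSpace X] [CompactSpace X]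
    (f : C(X, X)) (hf : f ∈ closure {g : C(X, X) | ∃ e : X ≃ₜ X, ⇑e = ⇑g})
    (ε : ℝ) (hε : 0 < ε) :
    (∃ β : InvLim ⇑f ≃ₜ X, ∀ x : InvLim ⇑f, dist (β x) (x.val 0) < ε) ∧
    Nonempty (InvLim ⇑f ≃ₜ X) := by
  obtain ⟨S, hS⟩ := BrownSystem.exists_δ_zero_eq f.continuous
    (isNearHomeomorph_of_mem_closure hf) (half_pos hε)
  refine ⟨⟨S.homeomorph f.continuous, fun x => ?_⟩, ⟨S.homeomorph f.continuous⟩⟩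
  have h := S.dist_β_le x.2 0
  rw [S.g_zero, Homeomorph.refl_apply, hS] at h
  rw [S.homeomorph_apply]
  exact h.trans_lt (half_lt_self hε)
end
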